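/- arXiv:1810.04117 — 4 statements merged into one kernel-verified Lean document; each statement's English description precedes it below -/
import Mathlib

section
/- Let w be a word over Σ_p at which Φ_p is defined, with left-to-right counters (H_i, v_i) and output letters w̄_i, and write (x̄_i, ȳ_i) = w̄_1 + … + w̄_i. Then for every i, p·#{j ≤ i : w_j ≥ 0} − 2·#{j ≤ i : w_j = −1} − (ȳ_i − x̄_i) = (p + 2)·|H_i|, where |H_i| is the number of letters of H_i. In particular, if moreover w is a p-Łukasiewicz word of length n, then the endpoint (x̄_n, ȳ_n) of Φ_p(w) satisfies ȳ_n − x̄_n = p·#{j : w_j ≥ 0} − 2·#{j : w_j = −1}. -/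
/-- Words over the alphabet `Σ_p = {-1, 0, 1, …, p}`. -/
def SigmaWord (p : ℕ) (w : List ℤ) : Prop := ∀ a ∈ w, -1 ≤ a ∧ a ≤ (p : ℤ)

/-- A `p`-Łukasiewicz word: a word over `Σ_p` all of whose prefix sums are
nonnegative and whose total sum is `0`. -/
def Lukasiewicz (p : ℕ) (w : List ℤ) : Prop :=
  SigmaWord p w ∧ (∀ i, 0 ≤ (w.take i).sum) ∧ w.sum = 0

/-- The step set `S_p`: the vectors `(-j, p-j)` for `0 ≤ j ≤ p` together with `(1, -1)`. -/
def InSp (p : ℕ) (s : ℤ × ℤ) : Prop :=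
  s = (1, -1) ∨ ∃ j : ℕ, j ≤ p ∧ s = (-(j : ℤ), (p : ℤ) - (j : ℤ))

/-- A quarter-plane `p`-tandem word: a word over `S_p` all of whose prefix sums
have both coordinates nonnegative. -/
def Tandem (p : ℕ) (w : List (ℤ × ℤ)) : Prop :=
  (∀ a ∈ w, InSp p a) ∧ ∀ i, 0 ≤ ((w.take i).sum).1 ∧ 0 ≤ ((w.take i).sum).2

/-- A word over the alphabet `A_p = { a_{ℓ,m} : ℓ + m ≤ p - 1 }`; letters are
encoded as pairs `(ℓ, m) : ℕ × ℕ`.  The stack `H` is represented with its most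
recently appended (rightmost) letter at the *head* of the list. -/
def HValid (p : ℕ) (H : List (ℕ × ℕ)) : Prop := ∀ x ∈ H, x.1 + x.2 + 1 ≤ p

/-- The forward step map `F`: from an input letter `μ ∈ Σ_p` and a counter
`(H, v)`, produce the new counter together with the output letter in `S_p`;
`none` is the error on the forbidden input `(-1, ε, 0)`.  The stack `H` has its
most recently appended letter at the head of the list. -/
def Fstep (p : ℕ) (μ : ℤ) (H : List (ℕ × ℕ)) (v : ℕ) :
    Option (List (ℕ × ℕ) × ℕ × (ℤ × ℤ)) :=
  if μ = (p : ℤ) then some (H, v + p, ((0 : ℤ), (p : ℤ)))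
  else if 0 ≤ μ then
    -- here `0 ≤ μ ≤ p - 1`
    if v = 0 then some (H, μ.toNat, ((0 : ℤ), (p : ℤ)))
    else some ((μ.toNat, 0) :: H, v - 1, ((1 : ℤ), (-1 : ℤ)))
  else
    -- here `μ = -1`
    match H, v with
    | [], 0 => none
    | [], v' + 1 => some ([], v', ((1 : ℤ), (-1 : ℤ)))
    | (l, m) :: H', 0 => some (H', l, (-(m : ℤ) - 1, (p : ℤ) - (m : ℤ) - 1))
    | (l, m) :: H', v' + 1 =>
      if l + m + 1 = p then
        some (H', (v' + 1) + l, (-(m : ℤ) - 1, (p : ℤ) - (m : ℤ) - 1))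
      else some ((l, m + 1) :: H', v', ((1 : ℤ), (-1 : ℤ)))

/-- The left-to-right process: starting from the counter `(H, v)`, process the
letters of the input word in order, returning the final counter together with
the output word, or `none` if an error occurs. -/
def PhiRun (p : ℕ) : List (ℕ × ℕ) → ℕ → List ℤ →
    Option (List (ℕ × ℕ) × ℕ × List (ℤ × ℤ))
  | H, v, [] => some (H, v, [])
  | H, v, μ :: w =>
    match Fstep p μ H v with
    | none => none
    | some (H', v', a) => (PhiRun p H' v' w).map (fun r => (r.1, r.2.1, a :: r.2.2))

/-- The partial map `Φ_p`: run the left-to-right process from `(ε, 0)` and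
return the output word. -/
def Phi (p : ℕ) (w : List ℤ) : Option (List (ℤ × ℤ)) :=
  (PhiRun p [] 0 w).map (fun r => r.2.2)

/-- The backward step map `B`: from a counter `(H, v)` and a letter `ā ∈ S_p`,
produce the input letter `μ ∈ Σ_p` and the previous counter.  The stack `H` has
its most recently appended letter at the head of the list.  (The value on
letters outside `S_p` is irrelevant junk.) -/
def Bstep (p : ℕ) (H : List (ℕ × ℕ)) (v : ℕ) (a : ℤ × ℤ) :
    ℤ × List (ℕ × ℕ) × ℕ :=
  if a = ((1 : ℤ), (-1 : ℤ)) then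
    match H with
    | [] => (-1, [], v + 1)
    | (l, 0) :: H' => ((l : ℤ), H', v + 1)
    | (l, m + 1) :: H' => (-1, (l, m) :: H', v + 1)
  else if a.1 = 0 then
    -- here `a = (0, p)`
    if v ≤ p - 1 then ((v : ℤ), H, 0) else ((p : ℤ), H, v - p)
  else
    -- here `a = (-m - 1, p - m - 1)` with `0 ≤ m ≤ p - 1`
    let m : ℕ := (-a.1 - 1).toNat
    if v ≤ p - m - 1 then (-1, (v, m) :: H, 0)
    else (-1, (p - m - 1, m) :: H, v - (p - m - 1))

/-- The right-to-left process: starting from the counter `(ε, 0)` at the right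
end of the word, process the letters from right to left, returning the counter
at the left end together with the output word. -/
def PsiRun (p : ℕ) : List (ℤ × ℤ) → List (ℕ × ℕ) × ℕ × List ℤ
  | [] => ([], 0, [])
  | a :: rest =>
    let r := PsiRun p rest
    let s := Bstep p r.1 r.2.1 a
    (s.2.1, s.2.2, s.1 :: r.2.2)

/-- The total map `Ψ_p`. -/
def Psi (p : ℕ) (w : List (ℤ × ℤ)) : List ℤ := (PsiRun p w).2.2

/-- The weight `wt_ℓ`, determined on letters by `wt_ℓ(a_{ℓ,m}) = ℓ + 1`. -/
def wtl (H : List (ℕ × ℕ)) : ℕ := (H.map (fun x => x.1 + 1)).sum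

/-- The weight `wt_m`, determined on letters by `wt_m(a_{ℓ,m}) = m + 1`. -/
def wtm (H : List (ℕ × ℕ)) : ℕ := (H.map (fun x => x.2 + 1)).sum

lemma wtl_cons (x : ℕ × ℕ) (H : List (ℕ × ℕ)) : wtl (x :: H) = x.1 + 1 + wtl H := by
  simp [wtl]

lemma Fstep_inv (p : ℕ) (μ : ℤ) (hμ1 : -1 ≤ μ) (hμ2 : μ ≤ (p : ℤ))
    (H : List (ℕ × ℕ)) (v : ℕ) (H₁ : List (ℕ × ℕ)) (v₁ : ℕ) (a : ℤ × ℤ)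
    (h : Fstep p μ H v = some (H₁, v₁, a)) :
    (p : ℤ) * (if 0 ≤ μ then 1 else 0) - 2 * (if μ = -1 then 1 else 0)
      - (a.2 - a.1) = ((p : ℤ) + 2) * ((H₁.length : ℤ) - (H.length : ℤ)) ∧
    ((v₁ : ℤ) + (wtl H₁ : ℤ)) = (v : ℤ) + (wtl H : ℤ) + μ := by
  unfold Fstep at h
  by_cases hp : μ = (p : ℤ)
  · rw [if_pos hp] at h
    simp only [Option.some.injEq, Prod.mk.injEq] at h
    obtain ⟨rfl, rfl, rfl⟩ := h
    have h0 : (0:ℤ) ≤ μ := by omega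
    have hne : ¬ (μ = -1) := by omega
    refine ⟨by simp only [if_pos h0, if_neg hne]; push_cast; ring, by push_cast; omega⟩
  · rw [if_neg hp] at h
    by_cases hnn : 0 ≤ μ
    · rw [if_pos hnn] at h
      have hne : ¬ (μ = -1) := by omega
      by_cases hv : v = 0
      · rw [if_pos hv] at h
        simp only [Option.some.injEq, Prod.mk.injEq] at h
        obtain ⟨rfl, rfl, rfl⟩ := h
        subst hv
        refine ⟨by simp only [if_pos hnn, if_neg hne]; push_cast; ring, by push_cast [Int.toNat_of_nonneg hnn]; ring⟩
      · rw [if_neg hv] at h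
        simp only [Option.some.injEq, Prod.mk.injEq] at h
        obtain ⟨rfl, rfl, rfl⟩ := h
        refine ⟨by simp only [if_pos hnn, if_neg hne, List.length_cons]; push_cast; ring, ?_⟩
        rw [wtl_cons]
        have hμt : (μ.toNat : ℤ) = μ := Int.toNat_of_nonneg hnn
        push_cast
        omega
    · rw [if_neg hnn] at h
      have hm1 : μ = -1 := by omega
      subst hm1
      match H, v with
      | [], 0 => simp at h
      | [], v' + 1 =>
        simp only [Option.some.injEq, Prod.mk.injEq] at h
        obtain ⟨rfl, rfl, rfl⟩ := h
        refine ⟨by norm_num, by push_cast; omega⟩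
      | (l, m) :: H', 0 =>
        simp only [Option.some.injEq, Prod.mk.injEq] at h
        obtain ⟨rfl, rfl, rfl⟩ := h
        refine ⟨?_, ?_⟩
        · simp only [if_neg hnn, if_pos rfl, List.length_cons]
          push_cast
          ring
        · rw [wtl_cons]; push_cast; omega
      | (l, m) :: H', v' + 1 =>
        simp only at h
        by_cases hlm : l + m + 1 = p
        · rw [if_pos hlm] at h
          simp only [Option.some.injEq, Prod.mk.injEq] at h
          obtain ⟨rfl, rfl, rfl⟩ := h
          refine ⟨?_, ?_⟩
          · simp only [if_neg hnn, if_pos rfl, List.length_cons]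
            push_cast
            ring
          · rw [wtl_cons]; push_cast; omega
        · rw [if_neg hlm] at h
          simp only [Option.some.injEq, Prod.mk.injEq] at h
          obtain ⟨rfl, rfl, rfl⟩ := h
          refine ⟨?_, ?_⟩
          · simp only [if_neg hnn, if_pos rfl, List.length_cons]
            push_cast
            ring
          · rw [wtl_cons, wtl_cons]; push_cast; omega

lemma PhiRun_inv (p : ℕ) (w : List ℤ) (hw : SigmaWord p w) :
    ∀ (H : List (ℕ × ℕ)) (v : ℕ) (H₁ : List (ℕ × ℕ)) (v₁ : ℕ) (out : List (ℤ × ℤ)),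
      PhiRun p H v w = some (H₁, v₁, out) →
        (p : ℤ) * (w.countP (fun a => decide (0 ≤ a)) : ℤ) -
            2 * (w.count (-1) : ℤ) - ((out.sum).2 - (out.sum).1) =
          ((p : ℤ) + 2) * ((H₁.length : ℤ) - (H.length : ℤ)) ∧
        ((v₁ : ℤ) + (wtl H₁ : ℤ)) = (v : ℤ) + (wtl H : ℤ) + w.sum := by
  induction w with
  | nil =>
    intro H v H₁ v₁ out h
    simp only [PhiRun, Option.some.injEq, Prod.mk.injEq] at h
    obtain ⟨rfl, rfl, rfl⟩ := h
    simp
  | cons μ w ih =>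
    intro H v H₁ v₁ out h
    have hμ := hw μ (by simp)
    have hw' : SigmaWord p w := fun a ha => hw a (by simp [ha])
    simp only [PhiRun] at h
    cases hF : Fstep p μ H v with
    | none => rw [hF] at h; simp at h
    | some r =>
      obtain ⟨H', v', a⟩ := r
      rw [hF] at h
      simp only [Option.map_eq_some_iff] at h
      obtain ⟨⟨H₂, v₂, out₂⟩, hrun, heq⟩ := h
      simp only [Prod.mk.injEq] at heq
      obtain ⟨rfl, rfl, rfl⟩ := heq
      obtain ⟨hs1, hs2⟩ := Fstep_inv p μ hμ.1 hμ.2 H v H' v' a hF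
      obtain ⟨hi1, hi2⟩ := ih hw' H' v' _ _ _ hrun
      constructor
      · simp only [List.countP_cons, List.count_cons, List.sum_cons]
        by_cases h0 : 0 ≤ μ
        · have hne : ¬ (μ = -1) := by omega
          rw [if_pos h0, if_neg hne] at hs1
          have hd : decide (0 ≤ μ) = true := by simpa using h0
          have hb : (μ == -1) = false := by simpa using hne
          rw [hd, hb]
          simp only [if_true, Prod.fst_add, Prod.snd_add]
          norm_num
          push_cast
          linarith [hs1, hi1]
        · have hm1 : μ = -1 := by omega
          subst hm1
          rw [if_neg h0, if_pos rfl] at hs1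
          have hd : decide ((0:ℤ) ≤ -1) = false := by decide
          have hb : ((-1:ℤ) == -1) = true := by decide
          rw [hd, hb]
          simp only [if_true, Prod.fst_add, Prod.snd_add]
          norm_num
          push_cast
          linarith [hs1, hi1]
      · simp only [List.sum_cons]
        omega

theorem k_minus_kbar_eq_stack_length (p : ℕ) (hp : 1 ≤ p)
    (w : List ℤ) (hw : SigmaWord p w) (hdef : (PhiRun p [] 0 w).isSome) :
    (∀ (i : ℕ) (H : List (ℕ × ℕ)) (v : ℕ) (out : List (ℤ × ℤ)),
      PhiRun p [] 0 (w.take i) = some (H, v, out) →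
        (p : ℤ) * ((w.take i).countP (fun a => decide (0 ≤ a)) : ℤ) -
            2 * ((w.take i).count (-1) : ℤ) -
            ((out.sum).2 - (out.sum).1) =
          ((p : ℤ) + 2) * (H.length : ℤ)) ∧
    (Lukasiewicz p w →
      ∀ (H : List (ℕ × ℕ)) (v : ℕ) (out : List (ℤ × ℤ)),
        PhiRun p [] 0 w = some (H, v, out) →
          (out.sum).2 - (out.sum).1 =
            (p : ℤ) * (w.countP (fun a => decide (0 ≤ a)) : ℤ) -
              2 * (w.count (-1) : ℤ)) := by
  constructor
  · intro i H v out h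
    have hwi : SigmaWord p (w.take i) := fun a ha => hw a (List.mem_of_mem_take ha)
    have := (PhiRun_inv p (w.take i) hwi [] 0 H v out h).1
    simpa using this
  · intro hL H v out h
    have h1 := (PhiRun_inv p w hw [] 0 H v out h).1
    have h2 := (PhiRun_inv p w hw [] 0 H v out h).2
    rw [hL.2.2] at h2
    have hwtl : wtl H = 0 := by
      have h0 : wtl ([] : List (ℕ × ℕ)) = 0 := rfl
      rw [h0] at h2
      omega
    have hHnil : H = [] := by
      cases H with
      | nil => rfl
      | cons x t => rw [wtl_cons] at hwtl; omega
    subst hHnil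
    simp at h1
    linarith
end

section
/- The forward step map F and the backward step map B are mutually inverse bijections: B(F(μ, H, v)) = (μ, H, v) for every (μ, H, v) ∈ Σ_p × A_p* × ℕ with (μ, H, v) ≠ (−1, ε, 0), and F(B(H, v, ā)) = (H, v, ā) for every (H, v, ā) ∈ A_p* × ℕ × S_p; consequently F is a bijection from (Σ_p × A_p* × ℕ) \ {(−1, ε, 0)} onto A_p* × ℕ × S_p. -/
theorem aux_BF (p : ℕ) (hp : 1 ≤ p) (μ : ℤ) (H : List (ℕ × ℕ)) (v : ℕ)
    (h1 : -1 ≤ μ) (h2 : μ ≤ (p:ℤ)) (hH : HValid p H) (hne : ¬(μ = -1 ∧ H = [] ∧ v = 0)) :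
    ∃ H' v' a, Fstep p μ H v = some (H', v', a) ∧ Bstep p H' v' a = (μ, H, v) := by
  rcases eq_or_lt_of_le h2 with hμp | hμp
  · refine ⟨H, v + p, (0, (p:ℤ)), ?_, ?_⟩
    · simp [Fstep, hμp]
    · have : ¬ (v + p ≤ p - 1) := by omega
      simp [Bstep, this, hμp]
  · rcases lt_or_ge μ 0 with hμ0 | hμ0
    · -- μ = -1
      have hμ : μ = -1 := by omega
      subst hμ
      match H, v with
      | [], 0 => exact absurd ⟨rfl, rfl, rfl⟩ hne
      | [], v' + 1 =>
        refine ⟨[], v', (1, -1), ?_, ?_⟩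
        · simp [Fstep]
        · simp [Bstep]
      | (l, m) :: H', 0 =>
        have hlm : l + m + 1 ≤ p := hH (l, m) (by simp)
        refine ⟨H', l, (-(m:ℤ) - 1, (p:ℤ) - m - 1), ?_, ?_⟩
        · simp [Fstep]
        · have h1 : ¬ ((-(m:ℤ) - 1, (p:ℤ) - m - 1) = ((1:ℤ), (-1:ℤ))) := by
            simp; intro h; omega
          have h2 : ¬ ((-(m:ℤ)-1 : ℤ) = 0) := by omega
          have h3 : (-(-(m:ℤ) - 1) - 1).toNat = m := by omega
          simp only [Bstep, h1, if_false, h2, if_false]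
          simp only [h3]
          have : l ≤ p - m - 1 := by omega
          simp [this]
      | (l, m) :: H', v' + 1 =>
        have hlm : l + m + 1 ≤ p := hH (l, m) (by simp)
        by_cases hfull : l + m + 1 = p
        · refine ⟨H', (v' + 1) + l, (-(m:ℤ) - 1, (p:ℤ) - m - 1), ?_, ?_⟩
          · simp [Fstep, hfull]
          · have h1 : ¬ ((-(m:ℤ) - 1, (p:ℤ) - m - 1) = ((1:ℤ), (-1:ℤ))) := by
              simp; intro h; omega
            have h2 : ¬ ((-(m:ℤ)-1 : ℤ) = 0) := by omega
            have h3 : (-(-(m:ℤ) - 1) - 1).toNat = m := by omega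
            have h4 : ¬ (v' + 1 + l ≤ p - m - 1) := by omega
            simp only [Bstep, h1, if_false, h2, if_false, h3, h4]
            simp
            omega
        · refine ⟨(l, m + 1) :: H', v', (1, -1), ?_, ?_⟩
          · simp [Fstep, hfull]
          · simp [Bstep]
    · -- 0 ≤ μ < p
      have hμn : μ.toNat < p := by omega
      rcases Nat.eq_zero_or_pos v with hv | hv
      · subst hv
        refine ⟨H, μ.toNat, (0, (p:ℤ)), ?_, ?_⟩
        · simp [Fstep, hμ0, hμp.ne]
        · have : μ.toNat ≤ p - 1 := by omega
          simp [Bstep, this]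
          omega
      · refine ⟨(μ.toNat, 0) :: H, v - 1, (1, -1), ?_, ?_⟩
        · simp [Fstep, hμ0, hμp.ne]; omega
        · simp [Bstep]
          omega

theorem aux_FB (p : ℕ) (hp : 1 ≤ p) (H : List (ℕ × ℕ)) (v : ℕ) (a : ℤ × ℤ)
    (hH : HValid p H) (ha : InSp p a) :
    Fstep p (Bstep p H v a).1 (Bstep p H v a).2.1 (Bstep p H v a).2.2 = some (H, v, a) := by
  have hpne : ¬ ((-1 : ℤ) = (p : ℕ)) := by omega
  rcases ha with rfl | ⟨j, hj, rfl⟩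
  · match H with
    | [] => simp [Bstep, Fstep, hpne]
    | (l, 0) :: H' =>
      have hl : l + 0 + 1 ≤ p := hH (l, 0) (by simp)
      have h1 : ¬ ((l : ℤ) = (p : ℕ)) := by omega
      simp [Bstep, Fstep, h1]
    | (l, m + 1) :: H' =>
      have hl : l + (m + 1) + 1 ≤ p := hH (l, m + 1) (by simp)
      have h1 : ¬ (l + m + 1 = p) := by omega
      simp [Bstep, Fstep, hpne, h1]
  · rcases Nat.eq_zero_or_pos j with rfl | hj1
    · have hne : ¬ (((-(0:ℕ) : ℤ), (p:ℤ) - (0:ℕ)) = ((1:ℤ), (-1:ℤ))) := by simp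
      by_cases hv : v ≤ p - 1
      · have h1 : ¬ ((v : ℤ) = (p : ℕ)) := by omega
        simp [Bstep, hne, hv, Fstep, h1]
      · have h1 : v - p + p = v := by omega
        simp [Bstep, hne, hv, Fstep, h1]
    · -- a = (-j, p - j), 1 ≤ j ≤ p; m = j - 1
      have hne : ¬ (((-(j:ℕ) : ℤ), (p:ℤ) - (j:ℕ)) = ((1:ℤ), (-1:ℤ))) := by
        simp; intro h; omega
      have h0 : ¬ ((-(j:ℕ) : ℤ) = 0) := by omega
      have hm : (-(-(j:ℕ) : ℤ) - 1).toNat = j - 1 := by omega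
      have hc1 : (-((j - 1 : ℕ) : ℤ) - 1) = -(j:ℕ) := by omega
      have hc2 : ((p:ℤ) - ((j - 1 : ℕ) : ℤ) - 1) = (p:ℤ) - (j:ℕ) := by omega
      by_cases hv : v ≤ p - (j - 1) - 1
      · have hval : v + (j - 1) + 1 ≤ p := by omega
        simp only [Bstep, if_neg hne, if_neg h0, hm, if_pos hv, Fstep, if_neg hpne]
        norm_num [hc1, hc2]
      · have hl : p - (j - 1) - 1 + (j - 1) + 1 = p := by omega
        have hv1 : ∃ w, v - (p - (j - 1) - 1) = w + 1 := ⟨v - (p - (j-1) - 1) - 1, by omega⟩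
        obtain ⟨w, hw⟩ := hv1
        simp only [Bstep, if_neg hne, if_neg h0, hm, if_neg hv, Fstep, if_neg hpne, hw]
        norm_num [hl, hc1, hc2]
        omega

theorem aux_Fmem (p : ℕ) (hp : 1 ≤ p) (μ : ℤ) (H : List (ℕ × ℕ)) (v : ℕ)
    (h1 : -1 ≤ μ) (h2 : μ ≤ (p:ℤ)) (hH : HValid p H)
    (hne : ¬(μ = -1 ∧ H = [] ∧ v = 0)) :
    ∃ H' v' a, Fstep p μ H v = some (H', v', a) ∧ HValid p H' ∧ InSp p a := by
  have hzp : InSp p ((0:ℤ), (p:ℤ)) := Or.inr ⟨0, by omega, by simp⟩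
  have hone : InSp p ((1:ℤ), (-1:ℤ)) := Or.inl rfl
  have hcons : ∀ (l m : ℕ) (Ht : List (ℕ × ℕ)), HValid p Ht → l + m + 1 ≤ p →
      HValid p ((l, m) :: Ht) := by
    intro l m Ht h hlm x hx
    rcases List.mem_cons.mp hx with h' | h'
    · simp [h']; omega
    · exact h x h'
  have htail : ∀ (y : ℕ × ℕ) (Ht : List (ℕ × ℕ)), HValid p (y :: Ht) → HValid p Ht :=
    fun y Ht h x hx => h x (by simp [hx])
  have hneg : ∀ m : ℕ, m + 1 ≤ p → InSp p ((-(m:ℤ) - 1, (p:ℤ) - (m:ℤ) - 1)) := by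
    intro m hm
    refine Or.inr ⟨m + 1, by omega, ?_⟩
    simp [Prod.ext_iff]; constructor <;> push_cast <;> ring
  rcases eq_or_lt_of_le h2 with hμp | hμp
  · exact ⟨H, v + p, (0, (p:ℤ)), by simp [Fstep, hμp], hH, hzp⟩
  · rcases lt_or_ge μ 0 with hμ0 | hμ0
    · have hμ : μ = -1 := by omega
      subst hμ
      match H, v with
      | [], 0 => exact absurd ⟨rfl, rfl, rfl⟩ hne
      | [], w + 1 =>
        exact ⟨[], w, (1, -1), by simp [Fstep], fun x hx => absurd hx (by simp), hone⟩
      | (l, m) :: Ht, 0 =>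
        have hlm : l + m + 1 ≤ p := hH (l, m) (by simp)
        exact ⟨Ht, l, _, by simp [Fstep], htail _ _ hH, hneg m (by omega)⟩
      | (l, m) :: Ht, w + 1 =>
        have hlm : l + m + 1 ≤ p := hH (l, m) (by simp)
        by_cases hfull : l + m + 1 = p
        · exact ⟨Ht, w + 1 + l, _, by simp [Fstep, hfull], htail _ _ hH, hneg m (by omega)⟩
        · exact ⟨(l, m + 1) :: Ht, w, _, by simp [Fstep, hfull],
            hcons l (m + 1) Ht (htail _ _ hH) (by omega), hone⟩
    · rcases Nat.eq_zero_or_pos v with hv | hv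
      · subst hv
        refine ⟨H, μ.toNat, (0, (p:ℤ)), by simp [Fstep, hμ0, hμp.ne], hH, hzp⟩
      · refine ⟨(μ.toNat, 0) :: H, v - 1, (1, -1), by simp [Fstep, hμ0, hμp.ne]; omega,
          hcons _ _ _ hH (by omega), hone⟩

theorem aux_Bmem (p : ℕ) (hp : 1 ≤ p) (H : List (ℕ × ℕ)) (v : ℕ) (a : ℤ × ℤ)
    (hH : HValid p H) (ha : InSp p a) :
    (-1 ≤ (Bstep p H v a).1 ∧ (Bstep p H v a).1 ≤ (p:ℤ)) ∧
    HValid p (Bstep p H v a).2.1 ∧ Bstep p H v a ≠ (-1, [], 0) := by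
  have hcons : ∀ (l m : ℕ) (Ht : List (ℕ × ℕ)), HValid p Ht → l + m + 1 ≤ p →
      HValid p ((l, m) :: Ht) := by
    intro l m Ht h hlm x hx
    rcases List.mem_cons.mp hx with h' | h'
    · simp [h']; omega
    · exact h x h'
  have htail : ∀ (y : ℕ × ℕ) (Ht : List (ℕ × ℕ)), HValid p (y :: Ht) → HValid p Ht :=
    fun y Ht h x hx => h x (by simp [hx])
  rcases ha with rfl | ⟨j, hj, rfl⟩
  · match H with
    | [] =>
      have hB : Bstep p [] v (1, -1) = (-1, [], v + 1) := by simp [Bstep]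
      rw [hB]
      exact ⟨⟨le_refl _, by omega⟩, fun x hx => absurd hx (by simp),
        by simp [Prod.ext_iff]⟩
    | (l, 0) :: H' =>
      have hl : l + 0 + 1 ≤ p := hH (l, 0) (by simp)
      have hB : Bstep p ((l, 0) :: H') v (1, -1) = ((l:ℤ), H', v + 1) := by simp [Bstep]
      rw [hB]
      exact ⟨⟨by omega, by omega⟩, htail _ _ hH, by simp [Prod.ext_iff]⟩
    | (l, m + 1) :: H' =>
      have hl : l + (m + 1) + 1 ≤ p := hH (l, m + 1) (by simp)
      have hB : Bstep p ((l, m + 1) :: H') v (1, -1) = (-1, (l, m) :: H', v + 1) := by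
        simp [Bstep]
      rw [hB]
      exact ⟨⟨le_refl _, by omega⟩, hcons l m H' (htail _ _ hH) (by omega),
        by simp [Prod.ext_iff]⟩
  · rcases Nat.eq_zero_or_pos j with rfl | hj1
    · by_cases hv : v ≤ p - 1
      · have hB : Bstep p H v ((-(0:ℕ) : ℤ), (p:ℤ) - (0:ℕ)) = ((v:ℤ), H, 0) := by
          simp [Bstep, hv]
        rw [hB]
        exact ⟨⟨by omega, by omega⟩, hH, by simp [Prod.ext_iff]⟩
      · have hB : Bstep p H v ((-(0:ℕ) : ℤ), (p:ℤ) - (0:ℕ)) = ((p:ℤ), H, v - p) := by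
          simp [Bstep, hv]
        rw [hB]
        exact ⟨⟨by omega, le_refl _⟩, hH, by simp [Prod.ext_iff]⟩
    · have hne : ¬ (((-(j:ℕ) : ℤ), (p:ℤ) - (j:ℕ)) = ((1:ℤ), (-1:ℤ))) := by
        simp; intro h; omega
      have h0 : ¬ ((-(j:ℕ) : ℤ) = 0) := by omega
      have hm : (-(-(j:ℕ) : ℤ) - 1).toNat = j - 1 := by omega
      by_cases hv : v ≤ p - (j - 1) - 1
      · have hB : Bstep p H v ((-(j:ℕ) : ℤ), (p:ℤ) - (j:ℕ)) = (-1, (v, j - 1) :: H, 0) := by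
          simp only [Bstep, if_neg hne, if_neg h0, hm, if_pos hv]
        rw [hB]
        exact ⟨⟨le_refl _, by omega⟩, hcons _ _ _ hH (by omega), by simp [Prod.ext_iff]⟩
      · have hB : Bstep p H v ((-(j:ℕ) : ℤ), (p:ℤ) - (j:ℕ)) =
            (-1, (p - (j - 1) - 1, j - 1) :: H, v - (p - (j - 1) - 1)) := by
          simp only [Bstep, if_neg hne, if_neg h0, hm, if_neg hv]
        rw [hB]
        exact ⟨⟨le_refl _, by omega⟩, hcons _ _ _ hH (by omega), by simp [Prod.ext_iff]⟩

theorem fstep_bstep_mutually_inverse (p : ℕ) (hp : 1 ≤ p) :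
    (∀ (μ : ℤ) (H : List (ℕ × ℕ)) (v : ℕ),
      -1 ≤ μ → μ ≤ (p : ℤ) → HValid p H → ¬(μ = -1 ∧ H = [] ∧ v = 0) →
        ∃ (H' : List (ℕ × ℕ)) (v' : ℕ) (a : ℤ × ℤ),
          Fstep p μ H v = some (H', v', a) ∧ Bstep p H' v' a = (μ, H, v)) ∧
    (∀ (H : List (ℕ × ℕ)) (v : ℕ) (a : ℤ × ℤ), HValid p H → InSp p a →
      Fstep p (Bstep p H v a).1 (Bstep p H v a).2.1 (Bstep p H v a).2.2 =
        some (H, v, a)) ∧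
    Set.BijOn
      (fun t : ℤ × List (ℕ × ℕ) × ℕ =>
        (Fstep p t.1 t.2.1 t.2.2).getD ([], 0, ((0 : ℤ), (0 : ℤ))))
      {t : ℤ × List (ℕ × ℕ) × ℕ |
        (-1 ≤ t.1 ∧ t.1 ≤ (p : ℤ)) ∧ HValid p t.2.1 ∧ t ≠ (-1, [], 0)}
      {s : List (ℕ × ℕ) × ℕ × (ℤ × ℤ) | HValid p s.1 ∧ InSp p s.2.2} := by
  refine ⟨fun μ H v h1 h2 hH hne => aux_BF p hp μ H v h1 h2 hH hne,
    fun H v a hH ha => aux_FB p hp H v a hH ha, ?_, ?_, ?_⟩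
  · rintro ⟨μ, H, v⟩ ⟨⟨h1, h2⟩, hH, hne⟩
    have hne' : ¬(μ = -1 ∧ H = [] ∧ v = 0) := by
      rintro ⟨rfl, rfl, rfl⟩; exact hne rfl
    obtain ⟨H', v', a, hF, hmem⟩ := aux_Fmem p hp μ H v h1 h2 hH hne'
    simp only [Set.mem_setOf_eq, hF, Option.getD_some]
    exact hmem
  · rintro ⟨μ1, H1, v1⟩ ⟨⟨h11, h12⟩, hH1, hne1⟩ ⟨μ2, H2, v2⟩ ⟨⟨h21, h22⟩, hH2, hne2⟩ heq
    obtain ⟨H1', v1', a1, hF1, hB1⟩ := aux_BF p hp μ1 H1 v1 h11 h12 hH1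
      (by rintro ⟨rfl, rfl, rfl⟩; exact hne1 rfl)
    obtain ⟨H2', v2', a2, hF2, hB2⟩ := aux_BF p hp μ2 H2 v2 h21 h22 hH2
      (by rintro ⟨rfl, rfl, rfl⟩; exact hne2 rfl)
    simp only [hF1, hF2, Option.getD_some] at heq
    cases heq
    rw [← hB1, ← hB2]
  · rintro ⟨H, v, a⟩ ⟨hH, ha⟩
    refine ⟨Bstep p H v a, ?_, ?_⟩
    · obtain ⟨hb1, hb2, hb3⟩ := aux_Bmem p hp H v a hH ha
      exact ⟨hb1, hb2, hb3⟩
    · show (Fstep p _ _ _).getD _ = _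
      rw [aux_FB p hp H v a hH ha]
      rfl
end

section
/- If w₁ and w₂ are both p-Łukasiewicz words, then Φ_p is defined at the concatenation w₁w₂ and Φ_p(w₁w₂) equals the concatenation of Φ_p(w₁) and Φ_p(w₂). -/
lemma wtl_nil : wtl [] = 0 := rfl

lemma wtl_eq_zero {H : List (ℕ × ℕ)} (h : wtl H = 0) : H = [] := by
  cases H with
  | nil => rfl
  | cons a t => simp [wtl] at h

lemma fstep_some (p : ℕ) (μ : ℤ) (H : List (ℕ × ℕ)) (v : ℕ)
    (hμ1 : -1 ≤ μ) (hμ2 : μ ≤ (p : ℤ))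
    (hne : ¬(μ = -1 ∧ H = [] ∧ v = 0)) :
    ∃ H' v' a, Fstep p μ H v = some (H', v', a) ∧
      ((v' : ℤ) + (wtl H' : ℤ)) = (v : ℤ) + (wtl H : ℤ) + μ := by
  by_cases h1 : μ = (p : ℤ)
  · exact ⟨H, v + p, ((0:ℤ),(p:ℤ)), by simp [Fstep, h1], by push_cast; linarith⟩
  by_cases h2 : 0 ≤ μ
  · by_cases h3 : v = 0
    · refine ⟨H, μ.toNat, ((0:ℤ),(p:ℤ)), by simp [Fstep, h1, h2, h3], ?_⟩
      rw [Int.toNat_of_nonneg h2]; subst h3; push_cast; ring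
    · refine ⟨(μ.toNat, 0) :: H, v - 1, ((1:ℤ),(-1:ℤ)), by simp [Fstep, h1, h2, h3], ?_⟩
      have hv : 1 ≤ v := Nat.one_le_iff_ne_zero.mpr h3
      simp [wtl]
      rw [max_eq_left h2]
      push_cast [hv]
      ring
  · have hμ : μ = -1 := by omega
    subst hμ
    have h1' : ¬((-1 : ℤ) = (p : ℤ)) := by omega
    match H, v with
    | [], 0 => exact absurd ⟨rfl, rfl, rfl⟩ hne
    | [], v' + 1 =>
      refine ⟨[], v', ((1:ℤ),(-1:ℤ)), by simp [Fstep], ?_⟩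
      push_cast; ring
    | (l, m) :: H', 0 =>
      refine ⟨H', l, (-(m:ℤ) - 1, (p:ℤ) - (m:ℤ) - 1), by simp [Fstep], ?_⟩
      simp [wtl]; push_cast; ring
    | (l, m) :: H', v' + 1 =>
      by_cases h4 : l + m + 1 = p
      · refine ⟨H', (v' + 1) + l, (-(m:ℤ) - 1, (p:ℤ) - (m:ℤ) - 1), by simp [Fstep, h4], ?_⟩
        simp [wtl]; push_cast; ring
      · refine ⟨(l, m + 1) :: H', v', ((1:ℤ),(-1:ℤ)), by simp [Fstep, h4], ?_⟩
        simp [wtl]; push_cast; ring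

lemma phiRun_some (p : ℕ) : ∀ (w : List ℤ) (H : List (ℕ × ℕ)) (v : ℕ),
    SigmaWord p w →
    (∀ i, 0 ≤ (v : ℤ) + (wtl H : ℤ) + (w.take i).sum) →
    ∃ H' v' out, PhiRun p H v w = some (H', v', out) ∧
      (v' : ℤ) + (wtl H' : ℤ) = (v : ℤ) + (wtl H : ℤ) + w.sum
  | [], H, v, _, _ => ⟨H, v, [], by simp [PhiRun], by simp⟩
  | μ :: w, H, v, hσ, hpre => by
    obtain ⟨hμ1, hμ2⟩ := hσ μ (by simp)
    have hne : ¬(μ = -1 ∧ H = [] ∧ v = 0) := by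
      rintro ⟨rfl, rfl, rfl⟩
      have := hpre 1
      simp [wtl] at this
    obtain ⟨H₁, v₁, a, hF, hw⟩ := fstep_some p μ H v hμ1 hμ2 hne
    obtain ⟨H', v', out, hR, hW⟩ := phiRun_some p w H₁ v₁
      (fun x hx => hσ x (by simp [hx]))
      (fun i => by
        have := hpre (i + 1)
        simp only [List.take_succ_cons, List.sum_cons] at this
        linarith)
    refine ⟨H', v', a :: out, ?_, ?_⟩
    · simp [PhiRun, hF, hR]
    · rw [hW, hw]; simp; ring

lemma phiRun_append (p : ℕ) : ∀ (w₁ : List ℤ) (w₂ : List ℤ) (H : List (ℕ × ℕ)) (v : ℕ)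
    (H' : List (ℕ × ℕ)) (v' : ℕ) (o₁ : List (ℤ × ℤ)),
    PhiRun p H v w₁ = some (H', v', o₁) →
    PhiRun p H v (w₁ ++ w₂) =
      (PhiRun p H' v' w₂).map (fun r => (r.1, r.2.1, o₁ ++ r.2.2))
  | [], w₂, H, v, H', v', o₁ => by
    intro h
    simp [PhiRun] at h
    obtain ⟨rfl, rfl, rfl⟩ := h
    simp
  | μ :: w₁, w₂, H, v, H', v', o₁ => by
    intro h
    simp only [PhiRun] at h ⊢
    match hF : Fstep p μ H v with
    | none => rw [hF] at h; simp at h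
    | some (H₁, v₁, a) =>
      rw [hF] at h
      simp only [Option.map_eq_some_iff] at h
      obtain ⟨r, hr, heq⟩ := h
      obtain ⟨o, rfl⟩ : ∃ o, o₁ = a :: o := by
        cases heq; exact ⟨r.2.2, rfl⟩
      have hr' : PhiRun p H₁ v₁ w₁ = some (H', v', o) := by
        rw [hr]
        cases heq
        rfl
      simp only [List.cons_append, PhiRun, hF]
      rw [phiRun_append p w₁ w₂ H₁ v₁ H' v' o hr']
      cases hW : PhiRun p H' v' w₂ <;> simp

theorem phi_concat_of_lukasiewicz (p : ℕ) (hp : 1 ≤ p)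
    (w₁ w₂ : List ℤ) (h₁ : Lukasiewicz p w₁) (h₂ : Lukasiewicz p w₂) :
    ∃ v₁ v₂, Phi p w₁ = some v₁ ∧ Phi p w₂ = some v₂ ∧
      Phi p (w₁ ++ w₂) = some (v₁ ++ v₂) := by
  obtain ⟨hσ₁, hpre₁, hsum₁⟩ := h₁
  obtain ⟨hσ₂, hpre₂, hsum₂⟩ := h₂
  obtain ⟨H₁, u₁, o₁, hR₁, hW₁⟩ := phiRun_some p w₁ [] 0 hσ₁
    (fun i => by simpa [wtl] using hpre₁ i)
  obtain ⟨H₂, u₂, o₂, hR₂, hW₂⟩ := phiRun_some p w₂ [] 0 hσ₂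
    (fun i => by simpa [wtl] using hpre₂ i)
  rw [hsum₁] at hW₁
  simp [wtl_nil] at hW₁
  have hu₁ : u₁ = 0 := by omega
  have hH₁ : H₁ = [] := wtl_eq_zero (by omega)
  subst hu₁; subst hH₁
  refine ⟨o₁, o₂, by simp [Phi, hR₁], by simp [Phi, hR₂], ?_⟩
  rw [Phi, phiRun_append p w₁ w₂ [] 0 [] 0 o₁ hR₁, hR₂]
  simp
end

section
/- If w̄₁ and w̄₂ are both quarter-plane p-tandem words, then Ψ_p(w̄₁w̄₂) equals the concatenation of Ψ_p(w̄₁) and Ψ_p(w̄₂). -/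
lemma psiRun_cons (p : ℕ) (a : ℤ × ℤ) (w : List (ℤ × ℤ)) :
    PsiRun p (a :: w) =
      ((Bstep p (PsiRun p w).1 (PsiRun p w).2.1 a).2.1,
       (Bstep p (PsiRun p w).1 (PsiRun p w).2.1 a).2.2,
       (Bstep p (PsiRun p w).1 (PsiRun p w).2.1 a).1 :: (PsiRun p w).2.2) := rfl

lemma Bstep_up (p : ℕ) (H : List (ℕ × ℕ)) (v : ℕ) :
    Bstep p H v ((0:ℤ), (p:ℤ)) =
      if v ≤ p - 1 then ((v : ℤ), H, 0) else ((p : ℤ), H, v - p) := by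
  unfold Bstep
  rw [if_neg (by simp), if_pos rfl]

lemma Bstep_j (p j : ℕ) (h1 : 1 ≤ j) (hjp : j ≤ p) (H : List (ℕ × ℕ)) (v : ℕ) :
    Bstep p H v (-(j:ℤ), (p:ℤ) - (j:ℤ)) =
      if v ≤ p - j then ((-1:ℤ), (v, j-1)::H, 0)
      else ((-1:ℤ), (p - j, j - 1)::H, v - (p - j)) := by
  unfold Bstep
  rw [if_neg (by
    simp only [Prod.mk.injEq, not_and]
    intro hh
    omega)]
  rw [if_neg (by
    simp only
    omega)]
  have hm1 : ((-(-(j:ℤ), (p:ℤ) - (j:ℤ)).1 - 1)).toNat = j - 1 := by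
    simp only
    omega
  simp only [hm1]
  have hm2 : p - (j - 1) - 1 = p - j := by omega
  simp only [hm2]

lemma key_invariant (p : ℕ) (hp : 1 ≤ p) :
    ∀ (w : List (ℤ × ℤ)), (∀ a ∈ w, InSp p a) →
    ∀ (Nx Ny : ℤ), 0 ≤ Nx → 0 ≤ Ny →
    (∀ i, -Nx ≤ ((w.take i).sum).1 ∧ -Ny ≤ ((w.take i).sum).2) →
    ((wtm (PsiRun p w).1 : ℤ) ≤ Nx ∧ (((PsiRun p w).2.1 : ℤ) ≤ Ny)) := by
  intro w
  induction w with
  | nil =>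
    intro _ Nx Ny hNx hNy _
    simp [PsiRun, wtm]
    omega
  | cons a rest ih =>
    intro hmem Nx Ny hNx hNy hb
    have hain : InSp p a := hmem a List.mem_cons_self
    have h1 : -Nx ≤ a.1 ∧ -Ny ≤ a.2 := by
      have := hb 1
      simpa using this
    have hrest := ih (fun b hb' => hmem b (List.mem_cons_of_mem _ hb'))
      (max 0 (Nx + a.1)) (max 0 (Ny + a.2)) (le_max_left _ _) (le_max_left _ _) ?_
    swap
    · intro i
      have := hb (i + 1)
      simp only [List.take_succ_cons, List.sum_cons, Prod.fst_add, Prod.snd_add] at this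
      omega
    rw [psiRun_cons]
    rcases hr : PsiRun p rest with ⟨H, v, u⟩
    rw [hr] at hrest
    simp only at hrest ⊢
    obtain ⟨hm, hvb⟩ := hrest
    rcases hain with h | ⟨j, hj, haj⟩
    · -- a = (1,-1)
      subst h
      norm_num at h1 hm hvb
      rcases H with _ | ⟨⟨l, m⟩, H'⟩
      · simp [Bstep, wtm] at hm ⊢
        omega
      · rcases m with _ | m
        · simp [Bstep, wtm] at hm ⊢
          omega
        · simp [Bstep, wtm] at hm ⊢
          omega
    · subst haj
      rcases Nat.eq_zero_or_pos j with hj0 | hjpos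
      · -- j = 0 : a = (0, p)
        subst hj0
        norm_num at h1 hm hvb ⊢
        rw [Bstep_up]
        by_cases hvle : v ≤ p - 1
        · rw [if_pos hvle]
          simp only
          omega
        · rw [if_neg hvle]
          simp only
          omega
      · -- j ≥ 1
        norm_num at h1 hm hvb ⊢
        rw [Bstep_j p j hjpos hj]
        by_cases hvle : v ≤ p - j
        · rw [if_pos hvle]
          simp only [wtm, List.map_cons, List.sum_cons]
          simp only [wtm] at hm
          omega
        · rw [if_neg hvle]
          simp only [wtm, List.map_cons, List.sum_cons]
          simp only [wtm] at hm
          omega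

lemma psiRun_tandem (p : ℕ) (hp : 1 ≤ p) (w : List (ℤ × ℤ)) (h : Tandem p w) :
    (PsiRun p w).1 = [] ∧ (PsiRun p w).2.1 = 0 := by
  obtain ⟨hmem, hpre⟩ := h
  have := key_invariant p hp w hmem 0 0 le_rfl le_rfl (by
    intro i
    have := hpre i
    constructor <;> omega)
  obtain ⟨h1, h2⟩ := this
  have hw : wtm (PsiRun p w).1 = 0 := by omega
  have hv : (PsiRun p w).2.1 = 0 := by omega
  refine ⟨?_, hv⟩
  rcases hHe : (PsiRun p w).1 with _ | ⟨⟨l, m⟩, H'⟩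
  · rfl
  · exfalso
    rw [hHe] at hw
    simp [wtm] at hw

lemma psiRun_append (p : ℕ) (w₁ w₂ : List (ℤ × ℤ))
    (h : (PsiRun p w₂).1 = [] ∧ (PsiRun p w₂).2.1 = 0) :
    PsiRun p (w₁ ++ w₂) =
      ((PsiRun p w₁).1, (PsiRun p w₁).2.1,
        (PsiRun p w₁).2.2 ++ (PsiRun p w₂).2.2) := by
  induction w₁ with
  | nil =>
    simp only [List.nil_append, PsiRun]
    rcases hr : PsiRun p w₂ with ⟨H, v, u⟩
    rw [hr] at h
    obtain ⟨h1, h2⟩ := h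
    simp at h1 h2
    subst h1; subst h2
    rfl
  | cons a t ih =>
    rw [List.cons_append, psiRun_cons, ih, psiRun_cons]
    simp

theorem psi_concat_of_tandem (p : ℕ) (hp : 1 ≤ p)
    (wb₁ wb₂ : List (ℤ × ℤ)) (h₁ : Tandem p wb₁) (h₂ : Tandem p wb₂) :
    Psi p (wb₁ ++ wb₂) = Psi p wb₁ ++ Psi p wb₂ := by
  have h2 := psiRun_tandem p hp wb₂ h₂
  have := psiRun_append p wb₁ wb₂ h2
  simp [Psi, this]
end
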